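/- Let f be a probability density on 𝕊² (f measurable, f ≥ 0 σ-a.e., ∫_{𝕊²} f dσ = 1) and set Q = ∫_{𝕊²} (m mᵀ − I/3) f(m) dσ(m). Then Q is a real symmetric traceless 3×3 matrix and every eigenvalue λ of Q satisfies −1/3 < λ < 2/3; that is, Q ∈ 𝒬_phy. -/

import Mathlib

/-!
Writing `Q = ∫ (m mᵀ − I/3) f dσ`, the quadratic form of `Q` is
`vᵀ Q v = ∫ ⟪v, m⟫² f dσ − ‖v‖²/3`. On the sphere `0 ≤ ⟪v, m⟫² ≤ ‖v‖²`, with equality on the left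
only on the great circle `v^⊥` and on the right only at `±v/‖v‖`; both sets are σ-null, so every
probability density gives `0 < ∫ ⟪v, m⟫² f dσ < ‖v‖²`. Applied to an eigenvector `v` of `Q` this
yields `−‖v‖²/3 < λ ‖v‖² < 2‖v‖²/3`.
-/

open MeasureTheory Real Metric Matrix
open scoped RealInnerProductSpace

noncomputable section

abbrev E3 : Type := EuclideanSpace ℝ (Fin 3)
abbrev S2 : Type := Metric.sphere (0 : E3) 1
abbrev Mat3 : Type := Matrix (Fin 3) (Fin 3) ℝ

/-- The standard (rotation-invariant) surface measure on 𝕊², of total mass 4π. -/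
noncomputable def sigma3 : Measure S2 := (volume : Measure E3).toSphere

/-- The quadratic form `m · B m` for `m ∈ 𝕊²`. -/
noncomputable def quadForm (B : Mat3) (m : S2) : ℝ :=
  ∑ i, ∑ j, (m : E3) i * B i j * (m : E3) j

/-- The Bingham partition function `Z_B = ∫ exp(m·Bm) dσ(m)`. -/
noncomputable def ZB (B : Mat3) : ℝ := ∫ m : S2, Real.exp (quadForm B m) ∂sigma3

/-- The Bingham density `f_B(m) = exp(m·Bm)/Z_B`. -/
noncomputable def bingham (B : Mat3) (m : S2) : ℝ := Real.exp (quadForm B m) / ZB B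

/-- The traceless second moment `∫ (m mᵀ − I/3) f dσ` of a density `f` on 𝕊². -/
noncomputable def secondMoment (f : S2 → ℝ) : Mat3 :=
  Matrix.of fun i j =>
    ∫ m : S2, ((m : E3) i * (m : E3) j - (if i = j then (1 : ℝ) / 3 else 0)) * f m ∂sigma3

/-- `Q ∈ 𝒬_phy`: symmetric, traceless, with all eigenvalues in `(−1/3, 2/3)`. -/
def Qphy (Q : Mat3) : Prop :=
  Q.IsSymm ∧ Q.trace = 0 ∧ ∀ μ ∈ spectrum ℝ Q, -(1 / 3 : ℝ) < μ ∧ μ < 2 / 3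

section Density

variable {X : Type*} [MeasurableSpace X] {μ : Measure X}

theorem MeasureTheory.Integrable.continuous_mul_of_compactSpace [TopologicalSpace X]
    [CompactSpace X] [OpensMeasurableSpace X] {g f : X → ℝ} (hg : Continuous g)
    (hf : Integrable f μ) : Integrable (fun x => g x * f x) μ :=
  integrableOn_univ.mp <| (integrableOn_univ.mpr hf).continuousOn_mul_of_subset
    hg.continuousOn isCompact_univ MeasurableSet.univ subset_rfl

theorem MeasureTheory.integral_mul_pos_of_ae_pos {f g : X → ℝ} (hf₀ : ∀ᵐ x ∂μ, 0 ≤ f x)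
    (hf : 0 < ∫ x, f x ∂μ) (hg : ∀ᵐ x ∂μ, 0 < g x) (hgf : Integrable (fun x => g x * f x) μ) :
    0 < ∫ x, g x * f x ∂μ := by
  have hfi : Integrable f μ := .of_integral_ne_zero hf.ne'
  rw [integral_pos_iff_support_of_nonneg_ae hf₀ hfi] at hf
  rw [integral_pos_iff_support_of_nonneg_ae
    (by filter_upwards [hf₀, hg] with x h₁ h₂ using mul_nonneg h₂.le h₁) hgf]
  convert hf using 1
  refine measure_congr (Filter.eventuallyEq_set.mpr ?_)
  filter_upwards [hg] with x hx
  simp [hx.ne']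

end Density

section Sphere

variable {E : Type*} [NormedAddCommGroup E] [InnerProductSpace ℝ E] [FiniteDimensional ℝ E]
  [MeasurableSpace E] [BorelSpace E] (μ : Measure E) [μ.IsAddHaarMeasure]

theorem MeasureTheory.Measure.ae_toSphere_notMem_submodule {p : Submodule ℝ E} (hp : p ≠ ⊤) :
    ∀ᵐ m : sphere (0 : E) 1 ∂μ.toSphere, (m : E) ∉ p := by
  have hs : MeasurableSet {m : sphere (0 : E) 1 | (m : E) ∈ p} :=
    (p.closed_of_finiteDimensional.preimage continuous_subtype_val).measurableSet
  refine (measure_eq_zero_iff_ae_notMem (s := {m : sphere (0 : E) 1 | (m : E) ∈ p})).mp ?_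
  rw [Measure.toSphere_apply' _ hs]
  refine mul_eq_zero_of_right _ (Measure.addHaar_submodule μ p hp |> measure_mono_null ?_)
  rintro _ ⟨r, -, _, ⟨m, hm, rfl⟩, rfl⟩
  exact p.smul_mem r hm

theorem MeasureTheory.Measure.ae_toSphere_inner_ne_zero {v : E} (hv : v ≠ 0) :
    ∀ᵐ m : sphere (0 : E) 1 ∂μ.toSphere, ⟪v, (m : E)⟫ ≠ 0 := by
  have hp : (ℝ ∙ v)ᗮ ≠ ⊤ := by
    rwa [Ne, Submodule.orthogonal_eq_top_iff, Submodule.span_singleton_eq_bot]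
  filter_upwards [μ.ae_toSphere_notMem_submodule hp] with m hm
  exact fun h => hm (Submodule.mem_orthogonal_singleton_iff_inner_right.mpr h)

theorem MeasureTheory.Measure.ae_toSphere_inner_sq_lt (hE : 1 < Module.finrank ℝ E) {v : E}
    (hv : v ≠ 0) : ∀ᵐ m : sphere (0 : E) 1 ∂μ.toSphere, ⟪v, (m : E)⟫ ^ 2 < ‖v‖ ^ 2 := by
  have hp : ℝ ∙ v ≠ ⊤ := by
    intro h
    have := finrank_span_singleton (K := ℝ) hv
    rw [h, finrank_top] at this
    omega
  filter_upwards [μ.ae_toSphere_notMem_submodule hp] with m hm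
  have hm₁ : ‖(m : E)‖ = 1 := norm_eq_of_mem_sphere m
  have hle : |⟪v, (m : E)⟫| ≤ ‖v‖ := by simpa [hm₁] using abs_real_inner_le_norm v m
  refine sq_lt_sq.mpr ((abs_norm v).symm ▸ hle.lt_of_ne fun h => hm ?_)
  obtain ⟨r, -, hr⟩ := (norm_inner_eq_norm_iff (𝕜 := ℝ) hv (ne_zero_of_mem_unit_sphere m)).mp
    (by simpa [hm₁] using h)
  exact hr ▸ Submodule.smul_mem _ r (Submodule.mem_span_singleton_self v)

theorem MeasureTheory.Measure.integral_inner_sq_mul_mem_Ioo (hE : 1 < Module.finrank ℝ E)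
    {f : sphere (0 : E) 1 → ℝ} (hf₀ : ∀ᵐ m ∂μ.toSphere, 0 ≤ f m)
    (hf : ∫ m, f m ∂μ.toSphere = 1) {v : E} (hv : v ≠ 0) :
    ∫ m, ⟪v, (m : E)⟫ ^ 2 * f m ∂μ.toSphere ∈ Set.Ioo 0 (‖v‖ ^ 2) := by
  have hfi : Integrable f μ.toSphere := .of_integral_ne_zero (by simp [hf])
  have hg : Continuous fun m : sphere (0 : E) 1 => ⟪v, (m : E)⟫ ^ 2 := by fun_prop
  have hgf := hfi.continuous_mul_of_compactSpace hg
  constructor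
  · exact integral_mul_pos_of_ae_pos hf₀ (by simp [hf])
      (by filter_upwards [μ.ae_toSphere_inner_ne_zero hv] with m hm using by positivity) hgf
  · have := integral_mul_pos_of_ae_pos hf₀ (by simp [hf])
      (μ.ae_toSphere_inner_sq_lt hE hv |>.mono fun m hm => sub_pos.mpr hm)
      (hfi.continuous_mul_of_compactSpace (continuous_const.sub hg))
    simp_rw [sub_mul] at this
    rw [integral_sub (hfi.const_mul _) hgf, integral_const_mul, hf, mul_one] at this
    linarith

end Sphere

theorem Matrix.exists_mulVec_eq_smul_of_mem_spectrum {R n : Type*} [Field R] [Fintype n]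
    [DecidableEq n] {A : Matrix n n R} {μ : R} (hμ : μ ∈ spectrum R A) :
    ∃ v ≠ 0, A *ᵥ v = μ • v := by
  rw [← Matrix.spectrum_toLin', ← Module.End.hasEigenvalue_iff_mem_spectrum] at hμ
  obtain ⟨v, hv⟩ := hμ.exists_hasEigenvector
  exact ⟨v, hv.2, by simpa using hv.apply_eq_smul⟩

theorem EuclideanSpace.norm_toLp_sq_eq_dotProduct {n : Type*} [Fintype n] (v : n → ℝ) :
    ‖WithLp.toLp 2 v‖ ^ 2 = v ⬝ᵥ v := by
  rw [← real_inner_self_eq_norm_sq, EuclideanSpace.inner_toLp_toLp, star_trivial]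

section SecondMoment

variable {f : S2 → ℝ}

theorem sum_coord_sq (m : S2) : ∑ i, (m : E3) i ^ 2 = 1 := by
  simpa [norm_eq_of_mem_sphere m] using (EuclideanSpace.real_norm_sq_eq (m : E3)).symm

theorem integrable_secondMoment_integrand (hf : Integrable f sigma3) (i j : Fin 3) :
    Integrable (fun m : S2 =>
      ((m : E3) i * (m : E3) j - (if i = j then (1 : ℝ) / 3 else 0)) * f m) sigma3 :=
  hf.continuous_mul_of_compactSpace (by fun_prop)

theorem secondMoment_isSymm (f : S2 → ℝ) : (secondMoment f).IsSymm := by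
  ext i j
  simp only [secondMoment, transpose_apply, of_apply, mul_comm ((_ : E3) j), eq_comm (a := j)]

theorem trace_secondMoment (hf : Integrable f sigma3) : (secondMoment f).trace = 0 := by
  simp only [trace, diag_apply, secondMoment, of_apply]
  rw [← integral_finsetSum _ fun i _ => by simpa using integrable_secondMoment_integrand hf i i]
  simp [← Finset.sum_mul, ← sq, sum_coord_sq]

theorem dotProduct_secondMoment_mulVec (hf : ∫ m, f m ∂sigma3 = 1) (v : Fin 3 → ℝ) :
    v ⬝ᵥ (secondMoment f *ᵥ v) =
      ∫ m, ⟪WithLp.toLp 2 v, (m : E3)⟫ ^ 2 * f m ∂sigma3 - ‖WithLp.toLp 2 v‖ ^ 2 / 3 := by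
  have hfi : Integrable f sigma3 := .of_integral_ne_zero (by simp [hf])
  have hint (i j : Fin 3) :=
    ((integrable_secondMoment_integrand hfi i j).const_mul (v i)).mul_const (v j)
  calc v ⬝ᵥ (secondMoment f *ᵥ v)
      = ∑ i, ∑ j, ∫ m, v i *
          (((m : E3) i * (m : E3) j - (if i = j then (1 : ℝ) / 3 else 0)) * f m) * v j ∂sigma3 := by
        simp only [dotProduct, mulVec, secondMoment, of_apply, Finset.mul_sum]
        refine Finset.sum_congr rfl fun i _ => Finset.sum_congr rfl fun j _ => ?_
        rw [integral_mul_const, integral_const_mul, mul_assoc]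
    _ = ∫ m, ∑ i, ∑ j, v i *
          (((m : E3) i * (m : E3) j - (if i = j then (1 : ℝ) / 3 else 0)) * f m) * v j ∂sigma3 := by
        rw [integral_finsetSum _ fun i _ => integrable_finsetSum _ fun j _ => hint i j]
        exact Finset.sum_congr rfl fun i _ => (integral_finsetSum _ fun j _ => hint i j).symm
    _ = ∫ m, (⟪WithLp.toLp 2 v, (m : E3)⟫ ^ 2 - ‖WithLp.toLp 2 v‖ ^ 2 / 3) * f m ∂sigma3 := by
        congr 1 with m
        simp only [EuclideanSpace.inner_eq_star_dotProduct, EuclideanSpace.real_norm_sq_eq,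
          dotProduct, Fin.sum_univ_three, star_trivial, Fin.isValue, ↓reduceIte, one_div,
          sub_zero, Fin.reduceEq]
        ring
    _ = _ := by
        simp only [sub_mul]
        rw [integral_sub (hfi.continuous_mul_of_compactSpace (by fun_prop)) (hfi.const_mul _),
          integral_const_mul, hf, mul_one]

end SecondMoment

theorem stmt17_general (f : S2 → ℝ)
    (hpos : ∀ᵐ m ∂sigma3, 0 ≤ f m) (hprob : ∫ m, f m ∂sigma3 = 1) :
    Qphy (secondMoment f) := by
  have hf : Integrable f sigma3 := .of_integral_ne_zero (by simp [hprob])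
  refine ⟨secondMoment_isSymm f, trace_secondMoment hf, fun μ hμ => ?_⟩
  obtain ⟨v, hv, hQv⟩ := exists_mulVec_eq_smul_of_mem_spectrum hμ
  have hquad := dotProduct_secondMoment_mulVec hprob v
  rw [hQv, dotProduct_smul, smul_eq_mul, ← EuclideanSpace.norm_toLp_sq_eq_dotProduct] at hquad
  set w : E3 := WithLp.toLp 2 v
  have hw : w ≠ 0 := by simpa [w] using hv
  obtain ⟨hlo, hhi⟩ : ∫ m, ⟪w, (m : E3)⟫ ^ 2 * f m ∂sigma3 ∈ Set.Ioo 0 (‖w‖ ^ 2) :=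
    volume.integral_inner_sq_mul_mem_Ioo (by simp) hpos hprob hw
  have hw₂ : 0 < ‖w‖ ^ 2 := by positivity
  constructor <;> nlinarith

/-- For every probability density `f` on 𝕊², the matrix `Q = ∫ (m mᵀ − I/3) f dσ` is
symmetric, traceless, and all its eigenvalues lie in the open interval `(−1/3, 2/3)`,
i.e. `Q ∈ 𝒬_phy`. -/
theorem stmt17 (f : S2 → ℝ) (hf : Measurable f)
    (hpos : ∀ᵐ m ∂sigma3, 0 ≤ f m) (hprob : ∫ m, f m ∂sigma3 = 1) :
    Qphy (secondMoment f) :=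
  stmt17_general f hpos hprob
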